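/- arXiv:1909.13604 — 2 statements merged into one kernel-verified Lean document; each statement's English description precedes it below -/
import Mathlib

section
/- Alternating simulation implies alternating-trace containment for interface automata: if s₁ ≤_as s₂ then s₁ ≤_atc s₂. -/
/-- An interface automaton over inputs `In`, outputs `Out`, states `State`. -/
structure IA (In Out State : Type) where
  init : State
  tr : State → (In ⊕ Out) → State → Prop

namespace IA

variable {In Out State State1 State2 State3 : Type}

/-- One-step successor sets. -/
def step (s : IA In Out State) (P : Set State) (ℓ : In ⊕ Out) : Set State :=
  {q' | ∃ q ∈ P, s.tr q ℓ q'}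

/-- `s after σ`: states reachable from the initial state via word `σ`. -/
def after (s : IA In Out State) (σ : List (In ⊕ Out)) : Set State :=
  σ.foldl s.step {s.init}

/-- Traces of `s`. -/
def traces (s : IA In Out State) : Set (List (In ⊕ Out)) :=
  {σ | (s.after σ).Nonempty}

/-- Inputs enabled in *all* states of `P`. -/
def inSet (s : IA In Out State) (P : Set State) : Set In :=
  {a | ∀ q ∈ P, ∃ q', s.tr q (Sum.inl a) q'}

/-- Outputs enabled in *some* state of `P`. -/
def outSet (s : IA In Out State) (P : Set State) : Set Out :=
  {x | ∃ q ∈ P, ∃ q', s.tr q (Sum.inr x) q'}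

end IA

/-- Input-failure traces: a word over `L = In ⊕ Out` possibly followed by a
    final input-failure symbol `ā` (encoded as `some a`). -/
abbrev FTrace (In Out : Type) := List (In ⊕ Out) × Option In

/-- A set of input-failure traces is input-failure closed. -/
def fclosed {In Out : Type} (S : Set (FTrace In Out)) : Prop :=
  ∀ (σ : List (In ⊕ Out)) (a : In) (ρ : FTrace In Out),
    (σ, some a) ∈ S → (σ ++ Sum.inl a :: ρ.1, ρ.2) ∈ S

/-- Input-failure closure. -/
def fcl {In Out : Type} (S : Set (FTrace In Out)) : Set (FTrace In Out) :=
  S ∪ {t | ∃ (σ : List (In ⊕ Out)) (a : In) (ρ : FTrace In Out),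
        (σ, some a) ∈ S ∧ t = (σ ++ Sum.inl a :: ρ.1, ρ.2)}

namespace IA

variable {In Out State State1 State2 State3 : Type}

/-- Input-failure traces of an IA. -/
def Ftraces (s : IA In Out State) : Set (FTrace In Out) :=
  {t | (t.2 = none ∧ t.1 ∈ s.traces) ∨
       (∃ a, t.2 = some a ∧ a ∉ s.inSet (s.after t.1))}

/-- Input-failure refinement. -/
def refIF (s1 : IA In Out State1) (s2 : IA In Out State2) : Prop :=
  s1.Ftraces ⊆ fcl s2.Ftraces

/-- Output-existential words of `s`. -/
def OE (s : IA In Out State) : Set (List (In ⊕ Out)) :=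
  {σ | ∀ ρ x τ, σ = ρ ++ Sum.inr x :: τ → x ∈ s.outSet (s.after ρ)}

/-- Input-universal words of `s`. -/
def IU (s : IA In Out State) : Set (List (In ⊕ Out)) :=
  {σ | ∀ ρ a τ, σ = ρ ++ Sum.inl a :: τ → a ∈ s.inSet (s.after ρ)}

/-- Input-universal / output-existential refinement. -/
def refIUOE (s1 : IA In Out State1) (s2 : IA In Out State2) : Prop :=
  s1.OE ∩ s2.IU ⊆ s1.IU ∩ s2.OE

/-- Utraces: traces where every occurring input is enabled in all states
    reached by the preceding prefix. -/
def Utraces (s : IA In Out State) : Set (List (In ⊕ Out)) :=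
  {σ | σ ∈ s.traces ∧
       ∀ ρ a, (ρ ++ [Sum.inl a]) <+: σ → a ∈ s.inSet (s.after ρ)}

/-- `Δ`: add a `δ`-selfloop (a fresh output) to each quiescent state. -/
def delta (s : IA In Out State) : IA In (Out ⊕ Unit) State where
  init := s.init
  tr := fun q ℓ q' =>
    match ℓ with
    | Sum.inl a => s.tr q (Sum.inl a) q'
    | Sum.inr (Sum.inl x) => s.tr q (Sum.inr x) q'
    | Sum.inr (Sum.inr _) => q' = q ∧ ∀ x q'', ¬ s.tr q (Sum.inr x) q''

/-- `i uioco s`. -/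
def uioco (i : IA In Out State1) (s : IA In Out State2) : Prop :=
  ∀ σ ∈ (delta s).Utraces,
    (delta i).outSet ((delta i).after σ) ⊆ (delta s).outSet ((delta s).after σ) ∧
    (delta s).inSet ((delta s).after σ) ⊆ (delta i).inSet ((delta i).after σ)

/-! ### Game framework -/

/-- A (finite) path: a list of (label, target-state) steps from the initial state. -/
abbrev Path (In Out State : Type) := List ((In ⊕ Out) × State)

/-- The state reached just before step `n` of `π` (the initial state for `n = 0`). -/
def stateAt (s : IA In Out State) (π : Path In Out State) : ℕ → State
  | 0 => s.init
  | Nat.succ m => ((π[m]?).map Prod.snd).getD s.init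

/-- The final state of a path. -/
def lastState (s : IA In Out State) (π : Path In Out State) : State :=
  stateAt s π π.length

/-- Validity of a path. -/
def IsPath (s : IA In Out State) (π : Path In Out State) : Prop :=
  ∀ n p, π[n]? = some p → s.tr (stateAt s π n) p.1 p.2

/-- Output strategies. -/
structure OutStrat (s : IA In Out State) where
  f : Path In Out State → Option Out
  valid : ∀ π x, IsPath s π → f π = some x →
    ∃ q', s.tr (lastState s π) (Sum.inr x) q'

/-- Input strategies. -/
structure InStrat (s : IA In Out State) where
  f : Path In Out State → Option In
  valid : ∀ π a, IsPath s π → f π = some a →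
    ∃ q', s.tr (lastState s π) (Sum.inl a) q'

/-- Determinization strategies. -/
structure DetStrat (s : IA In Out State) where
  f : Path In Out State → (In ⊕ Out) → Option State
  total : ∀ π ℓ, IsPath s π → (∃ q', s.tr (lastState s π) ℓ q') → (f π ℓ).isSome
  valid : ∀ π ℓ q', IsPath s π → f π ℓ = some q' → s.tr (lastState s π) ℓ q'

/-- Race-condition strategies: `false` = prefer input, `true` = prefer output. -/
abbrev RaceStrat (In Out State : Type) := Path In Out State → Bool

/-- An input strategy is trace-based if it depends only on the trace of the path. -/
def TraceBased (s : IA In Out State) (fi : InStrat s) : Prop :=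
  ∀ π π', IsPath s π → IsPath s π' →
    π.map Prod.fst = π'.map Prod.fst → fi.f π = fi.f π'

/-- Extend a path by label `ℓ` using the determinization strategy. -/
def push (s : IA In Out State) (fd : DetStrat s) (π : Path In Out State)
    (ℓ : In ⊕ Out) : Path In Out State :=
  match fd.f π ℓ with
  | some q => π ++ [(ℓ, q)]
  | none => π

/-- One step of the strategy-driven execution. -/
def gstep (s : IA In Out State) (fi : InStrat s) (fo : OutStrat s)
    (fd : DetStrat s) (fr : RaceStrat In Out State)
    (π : Path In Out State) : Path In Out State :=
  match fi.f π, fo.f π with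
  | some a, none => push s fd π (Sum.inl a)
  | none, some x => push s fd π (Sum.inr x)
  | some a, some x => if fr π then push s fd π (Sum.inr x) else push s fd π (Sum.inl a)
  | none, none => π

/-- The `n`-th label of the (finite or infinite) outcome of the four strategies. -/
def outcomeTrace (s : IA In Out State) (fi : InStrat s) (fo : OutStrat s)
    (fd : DetStrat s) (fr : RaceStrat In Out State) (n : ℕ) : Option (In ⊕ Out) :=
  (((gstep s fi fo fd fr)^[n + 1] ([] : Path In Out State))[n]?).map Prod.fst

/-- Alternating-trace containment for IA. -/
def refATC (s1 : IA In Out State1) (s2 : IA In Out State2) : Prop :=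
  ∀ (fo1 : OutStrat s1) (fd1 : DetStrat s1) (fr1 : RaceStrat In Out State1),
  ∃ (fo2 : OutStrat s2) (fd2 : DetStrat s2) (fr2 : RaceStrat In Out State2),
  ∀ (fi2 : InStrat s2), ∃ (fi1 : InStrat s1),
    ∀ n, outcomeTrace s1 fi1 fo1 fd1 fr1 n = outcomeTrace s2 fi2 fo2 fd2 fr2 n

/-- The reordered, trace-based game relation `≤_{∀∀∃∃}^{tb}`. -/
def refAAEEtb (s1 : IA In Out State1) (s2 : IA In Out State2) : Prop :=
  ∀ (fi2 : InStrat s2), TraceBased s2 fi2 →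
  ∀ (fo1 : OutStrat s1) (fd1 : DetStrat s1) (fr1 : RaceStrat In Out State1),
  ∃ (fi1 : InStrat s1), TraceBased s1 fi1 ∧
  ∃ (fo2 : OutStrat s2) (fd2 : DetStrat s2) (fr2 : RaceStrat In Out State2),
    ∀ n, outcomeTrace s1 fi1 fo1 fd1 fr1 n = outcomeTrace s2 fi2 fo2 fd2 fr2 n

/-- Alternating simulation. -/
def IsAltSim (s1 : IA In Out State1) (s2 : IA In Out State2)
    (R : State1 → State2 → Prop) : Prop :=
  ∀ q1 q2, R q1 q2 →
    (s1.outSet {q1} ⊆ s2.outSet {q2}) ∧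
    (s2.inSet {q2} ⊆ s1.inSet {q1}) ∧
    (∀ a q1', a ∈ s2.inSet {q2} → s1.tr q1 (Sum.inl a) q1' →
       ∃ q2', s2.tr q2 (Sum.inl a) q2' ∧ R q1' q2') ∧
    (∀ x q1', s1.tr q1 (Sum.inr x) q1' →
       ∃ q2', s2.tr q2 (Sum.inr x) q2' ∧ R q1' q2')

/-- Greatest alternating simulation relates the initial states. -/
def refAS (s1 : IA In Out State1) (s2 : IA In Out State2) : Prop :=
  ∃ R, IsAltSim s1 s2 R ∧ R s1.init s2.init

/-- Image finiteness. -/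
def ImageFinite (s : IA In Out State) : Prop :=
  ∀ q ℓ, {q' | s.tr q ℓ q'}.Finite

/-- Input-universal determinization (subset construction restricted to
    universally enabled inputs and existentially enabled outputs). -/
def detIU (s : IA In Out State) : IA In Out (Set State) where
  init := {s.init}
  tr := fun P ℓ P' => P.Nonempty ∧
    (match ℓ with
     | Sum.inl a => a ∈ s.inSet P
     | Sum.inr x => x ∈ s.outSet P) ∧
    P' = s.step P ℓ

end IA

section AuxATC

open IA

attribute [local instance] Classical.propDecidable

variable {In Out S1 S2 S : Type}

namespace IA

/-- Replay a label word through a determinization strategy. -/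
def replay (s : IA In Out S) (fd : DetStrat s) (ls : List (In ⊕ Out)) :
    Path In Out S := ls.foldl (push s fd) []

lemma replay_append (s : IA In Out S) (fd : DetStrat s) (ls : List (In ⊕ Out))
    (ℓ : In ⊕ Out) : s.replay fd (ls ++ [ℓ]) = push s fd (s.replay fd ls) ℓ := by
  simp [replay]

lemma mem_inSet_singleton {s : IA In Out S} {q : S} {a : In} :
    a ∈ s.inSet {q} ↔ ∃ q', s.tr q (Sum.inl a) q' := by
  simp [inSet]

lemma mem_outSet_singleton {s : IA In Out S} {q : S} {x : Out} :
    x ∈ s.outSet {q} ↔ ∃ q', s.tr q (Sum.inr x) q' := by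
  simp [outSet]

lemma stateAt_append (s : IA In Out S) (π : Path In Out S) (p : (In ⊕ Out) × S)
    {n : ℕ} (hn : n ≤ π.length) : stateAt s (π ++ [p]) n = stateAt s π n := by
  cases n with
  | zero => rfl
  | succ m =>
    have hm : m < π.length := hn
    simp [stateAt, List.getElem?_append_left hm]

lemma lastState_append (s : IA In Out S) (π : Path In Out S)
    (p : (In ⊕ Out) × S) : lastState s (π ++ [p]) = p.2 := by
  simp [lastState, stateAt, List.getElem?_concat_length]

lemma isPath_append (s : IA In Out S) (π : Path In Out S) (p : (In ⊕ Out) × S)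
    (h : IsPath s π) (ht : s.tr (lastState s π) p.1 p.2) : IsPath s (π ++ [p]) := by
  intro n p' hget
  rcases lt_trichotomy n π.length with hlt | heq | hgt
  · rw [List.getElem?_append_left hlt] at hget
    rw [stateAt_append s π p hlt.le]
    exact h n p' hget
  · subst heq
    rw [List.getElem?_concat_length] at hget
    cases hget
    rw [stateAt_append s π p le_rfl]
    exact ht
  · have : (π ++ [p])[n]? = none := by
      rw [List.getElem?_eq_none_iff]
      simp
      omega
    rw [this] at hget
    cases hget

variable (s1 : IA In Out S1) (s2 : IA In Out S2)

/-- The mirrored output strategy on `s2`. -/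
noncomputable def mkOut (fo1 : OutStrat s1) (fd1 : DetStrat s1) : OutStrat s2 where
  f := fun π2 =>
    (fo1.f (s1.replay fd1 (π2.map Prod.fst))).bind fun x =>
      if ∃ q', s2.tr (lastState s2 π2) (Sum.inr x) q' then some x else none
  valid := by
    intro π x _ hf
    cases hfo : fo1.f (s1.replay fd1 (π.map Prod.fst)) with
    | none => rw [hfo, Option.bind_none] at hf; cases hf
    | some y =>
      rw [hfo, Option.bind_some] at hf
      by_cases hy : ∃ q', s2.tr (lastState s2 π) (Sum.inr y) q'
      · rw [if_pos hy] at hf; cases hf; exact hy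
      · rw [if_neg hy] at hf; cases hf

/-- The mirrored determinization strategy on `s2`. -/
noncomputable def mkDet (R : S1 → S2 → Prop) (fd1 : DetStrat s1) : DetStrat s2 where
  f := fun π2 ℓ =>
    if h : ∃ q2', s2.tr (lastState s2 π2) ℓ q2' ∧
        ∀ q1', fd1.f (s1.replay fd1 (π2.map Prod.fst)) ℓ = some q1' → R q1' q2' then
      some h.choose
    else if h2 : ∃ q2', s2.tr (lastState s2 π2) ℓ q2' then some h2.choose else none
  total := by
    intro π ℓ _ hex
    split
    · simp
    · simp
  valid := by
    intro π ℓ q' _ hf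
    split at hf
    next h => cases hf; exact h.choose_spec.1
    next =>
      split at hf
      next h2 => cases hf; exact h2.choose_spec
      next => cases hf

/-- The mirrored input strategy on `s1`. -/
noncomputable def mkIn (fi2 : InStrat s2) (fd2 : DetStrat s2) : InStrat s1 where
  f := fun π1 =>
    (fi2.f (s2.replay fd2 (π1.map Prod.fst))).bind fun a =>
      if ∃ q', s1.tr (lastState s1 π1) (Sum.inl a) q' then some a else none
  valid := by
    intro π a _ hf
    cases hfi : fi2.f (s2.replay fd2 (π.map Prod.fst)) with
    | none => rw [hfi, Option.bind_none] at hf; cases hf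
    | some b =>
      rw [hfi, Option.bind_some] at hf
      by_cases hb : ∃ q', s1.tr (lastState s1 π) (Sum.inl b) q'
      · rw [if_pos hb] at hf; cases hf; exact hb
      · rw [if_neg hb] at hf; cases hf

/-- The invariant of the bisimulation game between the two plays. -/
def GInv (fd1 : DetStrat s1) (fd2 : DetStrat s2) (R : S1 → S2 → Prop)
    (π1 : Path In Out S1) (π2 : Path In Out S2) : Prop :=
  π1.map Prod.fst = π2.map Prod.fst ∧ IsPath s1 π1 ∧ IsPath s2 π2 ∧
  s1.replay fd1 (π2.map Prod.fst) = π1 ∧ s2.replay fd2 (π1.map Prod.fst) = π2 ∧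
  R (lastState s1 π1) (lastState s2 π2)

/-- Pushing a commonly enabled label preserves the invariant. -/
lemma push_GInv (R : S1 → S2 → Prop) (fd1 : DetStrat s1)
    (π1 : Path In Out S1) (π2 : Path In Out S2)
    (hInv : GInv s1 s2 fd1 (mkDet s1 s2 R fd1) R π1 π2) (ℓ : In ⊕ Out)
    (hex1 : ∃ q1', s1.tr (lastState s1 π1) ℓ q1')
    (hstep : ∀ q1', s1.tr (lastState s1 π1) ℓ q1' →
      ∃ q2', s2.tr (lastState s2 π2) ℓ q2' ∧ R q1' q2') :
    GInv s1 s2 fd1 (mkDet s1 s2 R fd1) R (push s1 fd1 π1 ℓ)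
      (push s2 (mkDet s1 s2 R fd1) π2 ℓ) := by
  obtain ⟨hlab, hp1, hp2, hrep1, hrep2, hRl⟩ := hInv
  obtain ⟨q1', hfd1⟩ := Option.isSome_iff_exists.mp (fd1.total π1 ℓ hp1 hex1)
  have htr1 : s1.tr (lastState s1 π1) ℓ q1' := fd1.valid π1 ℓ q1' hp1 hfd1
  have hex2 : ∃ q2', s2.tr (lastState s2 π2) ℓ q2' ∧
      ∀ q1'', fd1.f (s1.replay fd1 (π2.map Prod.fst)) ℓ = some q1'' → R q1'' q2' := by
    obtain ⟨q2', htr2, hR2⟩ := hstep q1' htr1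
    refine ⟨q2', htr2, ?_⟩
    intro q1'' hq
    rw [hrep1, hfd1] at hq
    cases hq
    exact hR2
  have hfd2 : (mkDet s1 s2 R fd1).f π2 ℓ = some hex2.choose := by
    simp only [mkDet, dif_pos hex2]
  obtain ⟨htr2, hR2⟩ := hex2.choose_spec
  have hRq : R q1' hex2.choose := hR2 q1' (by rw [hrep1, hfd1])
  have hpush1 : push s1 fd1 π1 ℓ = π1 ++ [(ℓ, q1')] := by
    simp only [push, hfd1]
  have hpush2 : push s2 (mkDet s1 s2 R fd1) π2 ℓ = π2 ++ [(ℓ, hex2.choose)] := by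
    simp only [push, hfd2]
  rw [hpush1, hpush2]
  refine ⟨by simp [hlab], isPath_append s1 π1 _ hp1 htr1,
    isPath_append s2 π2 _ hp2 htr2, ?_, ?_, ?_⟩
  · rw [show ((π2 ++ [(ℓ, hex2.choose)]).map Prod.fst) = π2.map Prod.fst ++ [ℓ] by simp,
      replay_append, hrep1, hpush1]
  · rw [show ((π1 ++ [(ℓ, q1')]).map Prod.fst) = π1.map Prod.fst ++ [ℓ] by simp,
      replay_append, hrep2, hpush2]
  · rw [lastState_append, lastState_append]
    exact hRq

end IA

end AuxATC

open IA in
theorem stmt17 (In Out State1 State2 : Type)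
    (s1 : IA In Out State1) (s2 : IA In Out State2)
    (h : s1.refAS s2) : s1.refATC s2 := by
  obtain ⟨R, hR, hR0⟩ := h
  intro fo1 fd1 fr1
  refine ⟨mkOut s1 s2 fo1 fd1, mkDet s1 s2 R fd1,
    fun π2 => fr1 (s1.replay fd1 (π2.map Prod.fst)), ?_⟩
  intro fi2
  refine ⟨mkIn s1 s2 fi2 (mkDet s1 s2 R fd1), ?_⟩
  set fd2 := mkDet s1 s2 R fd1 with hfd2def
  set fo2 := mkOut s1 s2 fo1 fd1 with hfo2def
  set fr2 : RaceStrat In Out State2 :=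
    fun π2 => fr1 (s1.replay fd1 (π2.map Prod.fst)) with hfr2def
  set fi1 := mkIn s1 s2 fi2 fd2 with hfi1def
  have step : ∀ π1 π2, GInv s1 s2 fd1 fd2 R π1 π2 →
      GInv s1 s2 fd1 fd2 R (gstep s1 fi1 fo1 fd1 fr1 π1)
        (gstep s2 fi2 fo2 fd2 fr2 π2) := by
    intro π1 π2 hInv
    obtain ⟨hlab, hp1, hp2, hrep1, hrep2, hRl⟩ := hInv
    obtain ⟨hout, hin, hinstep, houtstep⟩ := hR _ _ hRl
    -- compare output choices
    have hfoB : ∀ x, fo1.f π1 = some x →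
        fo2.f π2 = some x ∧ ∃ q2', s2.tr (lastState s2 π2) (Sum.inr x) q2' := by
      intro x hfo1
      have henx1 : ∃ q1', s1.tr (lastState s1 π1) (Sum.inr x) q1' :=
        fo1.valid π1 x hp1 hfo1
      have henx2 : ∃ q2', s2.tr (lastState s2 π2) (Sum.inr x) q2' :=
        mem_outSet_singleton.mp (hout (mem_outSet_singleton.mpr henx1))
      refine ⟨?_, henx2⟩
      simp only [hfo2def, mkOut]
      rw [hrep1, hfo1, Option.bind_some, if_pos henx2]
    have hfoBn : fo1.f π1 = none → fo2.f π2 = none := by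
      intro hfo1
      simp only [hfo2def, mkOut]
      rw [hrep1, hfo1, Option.bind_none]
    -- compare input choices
    have hfiA : ∀ a, fi2.f π2 = some a →
        fi1.f π1 = some a ∧ (∃ q1', s1.tr (lastState s1 π1) (Sum.inl a) q1') ∧
          a ∈ s2.inSet {lastState s2 π2} := by
      intro a hfi2
      have hena2 : ∃ q2', s2.tr (lastState s2 π2) (Sum.inl a) q2' :=
        fi2.valid π2 a hp2 hfi2
      have hena1 : ∃ q1', s1.tr (lastState s1 π1) (Sum.inl a) q1' :=
        mem_inSet_singleton.mp (hin (mem_inSet_singleton.mpr hena2))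
      refine ⟨?_, hena1, mem_inSet_singleton.mpr hena2⟩
      simp only [hfi1def, mkIn]
      rw [hrep2, hfi2, Option.bind_some, if_pos hena1]
    have hfiAn : fi2.f π2 = none → fi1.f π1 = none := by
      intro hfi2
      simp only [hfi1def, mkIn]
      rw [hrep2, hfi2, Option.bind_none]
    have hfr : fr2 π2 = fr1 π1 := by
      simp only [hfr2def]
      rw [hrep1]
    have hInv' : GInv s1 s2 fd1 fd2 R π1 π2 :=
      ⟨hlab, hp1, hp2, hrep1, hrep2, hRl⟩
    -- the two kinds of common pushes
    have pushIn : ∀ a, (∃ q1', s1.tr (lastState s1 π1) (Sum.inl a) q1') →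
        a ∈ s2.inSet {lastState s2 π2} →
        GInv s1 s2 fd1 fd2 R (push s1 fd1 π1 (Sum.inl a)) (push s2 fd2 π2 (Sum.inl a)) := by
      intro a hex1 hmem
      exact push_GInv s1 s2 R fd1 π1 π2 hInv' (Sum.inl a) hex1
        (fun q1' htr => hinstep a q1' hmem htr)
    have pushOut : ∀ x, (∃ q1', s1.tr (lastState s1 π1) (Sum.inr x) q1') →
        GInv s1 s2 fd1 fd2 R (push s1 fd1 π1 (Sum.inr x)) (push s2 fd2 π2 (Sum.inr x)) := by
      intro x hex1
      exact push_GInv s1 s2 R fd1 π1 π2 hInv' (Sum.inr x) hex1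
        (fun q1' htr => houtstep x q1' htr)
    cases hfi2v : fi2.f π2 with
    | none =>
      have hfi1v := hfiAn hfi2v
      cases hfo1v : fo1.f π1 with
      | none =>
        have hfo2v := hfoBn hfo1v
        simp only [gstep, hfi1v, hfo1v, hfi2v, hfo2v]
        exact hInv'
      | some x =>
        obtain ⟨hfo2v, -⟩ := hfoB x hfo1v
        have hex1 : ∃ q1', s1.tr (lastState s1 π1) (Sum.inr x) q1' :=
          fo1.valid π1 x hp1 hfo1v
        simp only [gstep, hfi1v, hfo1v, hfi2v, hfo2v]
        exact pushOut x hex1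
    | some a =>
      obtain ⟨hfi1v, hena1, hmem2⟩ := hfiA a hfi2v
      cases hfo1v : fo1.f π1 with
      | none =>
        have hfo2v := hfoBn hfo1v
        simp only [gstep, hfi1v, hfo1v, hfi2v, hfo2v]
        exact pushIn a hena1 hmem2
      | some x =>
        obtain ⟨hfo2v, -⟩ := hfoB x hfo1v
        have hex1 : ∃ q1', s1.tr (lastState s1 π1) (Sum.inr x) q1' :=
          fo1.valid π1 x hp1 hfo1v
        simp only [gstep, hfi1v, hfo1v, hfi2v, hfo2v, hfr]
        cases hb : fr1 π1 with
        | false =>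
          simp only [if_neg Bool.false_ne_true]
          exact pushIn a hena1 hmem2
        | true =>
          simp only [if_pos rfl]
          exact pushOut x hex1
  have inv : ∀ n, GInv s1 s2 fd1 fd2 R ((gstep s1 fi1 fo1 fd1 fr1)^[n] [])
      ((gstep s2 fi2 fo2 fd2 fr2)^[n] []) := by
    intro n
    induction n with
    | zero =>
      refine ⟨rfl, ?_, ?_, rfl, rfl, hR0⟩
      · intro n p hget; simp at hget
      · intro n p hget; simp at hget
    | succ n ih =>
      rw [Function.iterate_succ_apply', Function.iterate_succ_apply']
      exact step _ _ ih
  intro n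
  have hlab := (inv (n + 1)).1
  simp only [outcomeTrace, ← List.getElem?_map, hlab]
end

section
/- For deterministic s₂, iuoe-refinement implies alternating simulation: if s₂ is deterministic and OE(s₁) ∩ IU(s₂) ⊆ IU(s₁) ∩ OE(s₂), then s₁ ≤_as s₂; in fact the relation R = {(q₁,q₂) | ∃σ ∈ OE(s₁) ∩ IU(s₂): q₁ ∈ s₁-after-σ and q₂ ∈ s₂-after-σ} is an alternating simulation from s₁ to s₂. -/
lemma split_snoc {α} {ρ σ : List α} {ℓ ℓ' : α} {τ : List α}
    (h : σ ++ [ℓ'] = ρ ++ ℓ :: τ) :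
    (ρ = σ ∧ ℓ = ℓ' ∧ τ = []) ∨ (∃ τ', σ = ρ ++ ℓ :: τ' ∧ τ = τ' ++ [ℓ']) := by
  rcases List.eq_nil_or_concat τ with rfl | ⟨τ', t, rfl⟩
  · left
    have h2 := List.append_inj' h (by simp)
    have := h2.1
    have h3 : ℓ = ℓ' := by simpa using h2.2.symm
    exact ⟨this.symm, h3, rfl⟩
  · right
    have h' : σ ++ [ℓ'] = (ρ ++ ℓ :: τ') ++ [t] := by simp [h]
    have h2 := List.append_inj' h' (by simp)
    have ht : ℓ' = t := by simpa using h2.2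
    exact ⟨τ', h2.1, by simp [ht]⟩

lemma IA.after_snoc {In Out State : Type} (s : IA In Out State)
    (σ : List (In ⊕ Out)) (ℓ : In ⊕ Out) :
    s.after (σ ++ [ℓ]) = s.step (s.after σ) ℓ := by
  simp [IA.after, List.foldl_append]

open IA in
theorem stmt18 (In Out State1 State2 : Type)
    (s1 : IA In Out State1) (s2 : IA In Out State2)
    (hdet : ∀ σ ∈ s2.traces, ∃! q, q ∈ s2.after σ)
    (h : s1.refIUOE s2) :
    IA.IsAltSim s1 s2
      (fun q1 q2 => ∃ σ, σ ∈ s1.OE ∩ s2.IU ∧ q1 ∈ s1.after σ ∧ q2 ∈ s2.after σ) ∧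
    s1.refAS s2 := by
  have after_eq : ∀ σ (q : State2), q ∈ s2.after σ → s2.after σ = {q} := by
    intro σ q hq
    obtain ⟨q', hq', huniq⟩ := hdet σ ⟨q, hq⟩
    ext r
    simp only [Set.mem_singleton_iff]
    constructor
    · intro hr; rw [huniq r hr, huniq q hq]
    · rintro rfl; exact hq
  -- key: extension lemmas
  have keyOut : ∀ σ (q1 : State1) x q1', σ ∈ s1.OE ∩ s2.IU → q1 ∈ s1.after σ →
      s1.tr q1 (Sum.inr x) q1' → (σ ++ [Sum.inr x]) ∈ s1.OE ∩ s2.IU := by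
    intro σ q1 x q1' hσ hq1 htr
    constructor
    · intro ρ y τ heq
      rcases split_snoc heq with ⟨rfl, hy, rfl⟩ | ⟨τ', rfl, rfl⟩
      · cases hy; exact ⟨q1, hq1, q1', htr⟩
      · exact hσ.1 ρ y τ' rfl
    · intro ρ a τ heq
      rcases split_snoc heq with ⟨rfl, hy, rfl⟩ | ⟨τ', rfl, rfl⟩
      · exact absurd hy (by simp)
      · exact hσ.2 ρ a τ' rfl
  have keyIn : ∀ σ (q2 : State2) a, σ ∈ s1.OE ∩ s2.IU → q2 ∈ s2.after σ →
      a ∈ s2.inSet {q2} → (σ ++ [Sum.inl a]) ∈ s1.OE ∩ s2.IU := by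
    intro σ q2 a hσ hq2 ha
    constructor
    · intro ρ y τ heq
      rcases split_snoc heq with ⟨rfl, hy, rfl⟩ | ⟨τ', rfl, rfl⟩
      · exact absurd hy (by simp)
      · exact hσ.1 ρ y τ' rfl
    · intro ρ b τ heq
      rcases split_snoc heq with ⟨rfl, hy, rfl⟩ | ⟨τ', rfl, rfl⟩
      · cases hy
        rw [after_eq _ q2 hq2]
        exact ha
      · exact hσ.2 ρ b τ' rfl
  have hsim : IA.IsAltSim s1 s2
      (fun q1 q2 => ∃ σ, σ ∈ s1.OE ∩ s2.IU ∧ q1 ∈ s1.after σ ∧ q2 ∈ s2.after σ) := by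
    rintro q1 q2 ⟨σ, hσ, hq1, hq2⟩
    have haft2 := after_eq σ q2 hq2
    refine ⟨?_, ?_, ?_, ?_⟩
    · rintro x ⟨q, hq, q1', htr⟩
      have hq' : q = q1 := hq
      subst hq'
      have hσ' := keyOut σ q x q1' hσ hq1 htr
      have h2 := (h hσ').2
      have hx : x ∈ s2.outSet (s2.after σ) := h2 σ x [] rfl
      rwa [haft2] at hx
    · rintro a ha
      have hσ' := keyIn σ q2 a hσ hq2 ha
      have h1 := (h hσ').1
      have hax : a ∈ s1.inSet (s1.after σ) := h1 σ a [] rfl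
      intro q hq
      have hq' : q = q1 := hq
      subst hq'
      exact hax q hq1
    · intro a q1' ha htr
      obtain ⟨q2', hq2'⟩ := ha q2 rfl
      refine ⟨q2', hq2', σ ++ [Sum.inl a], keyIn σ q2 a hσ hq2 ha, ?_, ?_⟩
      · rw [IA.after_snoc]; exact ⟨q1, hq1, htr⟩
      · rw [IA.after_snoc]; exact ⟨q2, hq2, hq2'⟩
    · intro x q1' htr
      have hσ' := keyOut σ q1 x q1' hσ hq1 htr
      have h2 := (h hσ').2
      have hx : x ∈ s2.outSet (s2.after σ) := h2 σ x [] rfl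
      obtain ⟨q, hq, q2', htr2⟩ := hx
      have hq' : q = q2 := by rw [haft2] at hq; exact hq
      subst hq'
      refine ⟨q2', htr2, σ ++ [Sum.inr x], hσ', ?_, ?_⟩
      · rw [IA.after_snoc]; exact ⟨q1, hq1, htr⟩
      · rw [IA.after_snoc]; exact ⟨_, hq2, htr2⟩
  refine ⟨hsim, ⟨_, hsim, [], ⟨?_, ?_⟩, rfl, rfl⟩⟩
  · intro ρ x τ heq; exact absurd heq (by simp)
  · intro ρ a τ heq; exact absurd heq (by simp)
end
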